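/- There exists a minimal Markov basis B such that every move z ∈ B contains an indispensable monomial (i.e., z⁺ or z⁻ is an indispensable monomial) if and only if every fiber F_t of the minimum-fiber set B_MF contains at least one singleton B_{|t|−1}-equivalence class. -/

import Mathlib

open scoped BigOperators

section Defs

variable {ι κ : Type*} [Fintype ι]

/-- Embed a frequency vector `x ∈ ℕ^ι` into `ℤ^ι`. -/
def natToInt (x : ι → ℕ) : ι → ℤ := fun i => (x i : ℤ)

/-- The fiber of `t`: all frequency vectors `x` with `A x = t`. -/
def fiberOf (A : Matrix κ ι ℤ) (t : κ → ℤ) : Set (ι → ℕ) :=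
  {x | A.mulVec (natToInt x) = t}

/-- A move for `A`: an integer vector in the kernel of `A`. -/
def IsMove (A : Matrix κ ι ℤ) (z : ι → ℤ) : Prop := A.mulVec z = 0

/-- The positive part `z⁺` of an integer vector, as a frequency vector. -/
def posOf (z : ι → ℤ) : ι → ℕ := fun i => (z i).toNat

/-- The negative part `z⁻` of an integer vector, as a frequency vector. -/
def negOf (z : ι → ℤ) : ι → ℕ := fun i => (-z i).toNat

/-- The degree of a move: `deg z = |z⁺|`. -/
def degOf (z : ι → ℤ) : ℕ := ∑ i, posOf z i

/-- One step: add or subtract one move of `B`, staying in `ℕ^ι`. -/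
def MStep (B : Set (ι → ℤ)) (x y : ι → ℕ) : Prop :=
  ∃ z ∈ B, natToInt y = natToInt x + z ∨ natToInt y = natToInt x - z

/-- `y` is accessible from `x` by the moves of `B` (staying nonnegative throughout,
since all intermediate points are frequency vectors). -/
def Accessible (B : Set (ι → ℤ)) : (ι → ℕ) → (ι → ℕ) → Prop :=
  Relation.ReflTransGen (MStep B)

/-- A Markov basis: a finite set of moves such that every fiber forms a single
equivalence class for mutual accessibility. -/
def IsMarkovBasis (A : Matrix κ ι ℤ) (B : Set (ι → ℤ)) : Prop :=
  B.Finite ∧ (∀ z ∈ B, IsMove A z) ∧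
    ∀ t : κ → ℤ, ∀ x ∈ fiberOf A t, ∀ y ∈ fiberOf A t, Accessible B x y

/-- A minimal Markov basis: no proper subset is a Markov basis. -/
def IsMinimalMarkovBasis (A : Matrix κ ι ℤ) (B : Set (ι → ℤ)) : Prop :=
  IsMarkovBasis A B ∧ ∀ B' ⊂ B, ¬ IsMarkovBasis A B'

/-- An indispensable monomial: every Markov basis contains a move whose
positive or negative part is `x`. -/
def IsIndispensableMonomial (A : Matrix κ ι ℤ) (x : ι → ℕ) : Prop :=
  ∀ B : Set (ι → ℤ), IsMarkovBasis A B → ∃ z ∈ B, posOf z = x ∨ negOf z = x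

/-- `B_n`: the set of moves of degree at most `n`. -/
def Bmoves (A : Matrix κ ι ℤ) (n : ℕ) : Set (ι → ℤ) :=
  {z | IsMove A z ∧ degOf z ≤ n}

/-- The sample size `|t|` of a sufficient statistic `t` (well defined on nonempty
fibers under homogeneity). -/
noncomputable def sampleSize (A : Matrix κ ι ℤ) (t : κ → ℤ) : ℕ :=
  sInf {n | ∃ x ∈ fiberOf A t, ∑ i, x i = n}

/-- The `B_{|t|-1}`-equivalence classes of the fiber of `t`. -/
noncomputable def fiberClasses (A : Matrix κ ι ℤ) (t : κ → ℤ) : Set (Set (ι → ℕ)) :=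
  {C | ∃ x ∈ fiberOf A t,
    C = {y | y ∈ fiberOf A t ∧ Accessible (Bmoves A (sampleSize A t - 1)) x y}}

/-- Homogeneity: some rational vector `w` has `w ⬝ aᵢ = 1` for every column `aᵢ`. -/
def IsHomogeneousMatrix [Fintype κ] (A : Matrix κ ι ℤ) : Prop :=
  ∃ w : κ → ℚ, ∀ i : ι, ∑ j, w j * (A j i : ℚ) = 1

end Defs

/-- The minimum-fiber set `B_MF`: nonzero moves whose positive and negative parts are
not mutually accessible by moves of lower degree. -/
def BMF {p d : ℕ} (A : Matrix (Fin d) (Fin p) ℤ) : Set (Fin p → ℤ) :=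
  {z | IsMove A z ∧ z ≠ 0 ∧
    ¬ Accessible (Bmoves A (degOf z - 1)) (posOf z) (negOf z)}

/-!
Homogeneity makes `|z⁺| = |z⁻|` for every move, so a step of a Markov basis `B` inside a
fiber of sample size `n` either is a `B_{n-1}`-step or uses a move `w ∈ B` of degree `n`, and
then its endpoints are exactly `w⁻` and `w⁺`. Hence `B` can join two `B_{n-1}`-classes of a
fiber only through moves whose parts lie in these classes. So a monomial `x` forming a
singleton class in a fiber with another class is indispensable. Conversely an indispensable `x`
forms a singleton class: otherwise, for some `x' ≠ x` in the class of `x`, deleting from a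
large `B_M` all moves with a part equal to `x` leaves a Markov basis, as the fiber of `x` is
still connected through `x'`.

If a Markov basis has an indispensable part in every move, the path from `z⁺` to `z⁻`
(`z ∈ B_MF`) leaves the class of `z⁺` through some move, whose indispensable part is a
singleton class in that fiber. Conversely, if every fiber with several classes has a singleton
class, the moves `u - c` with `{c}` a singleton class and `u ≠ c` in its fiber form a Markov
basis; it is finite because, by Dickson's lemma, fibers with several classes have bounded
sample size. Each of its moves has the indispensable negative part `c`, and so does every
minimal Markov basis inside it.
-/
open scoped Matrix

section Moves

variable {ι κ : Type*}

lemma natToInt_injective : Function.Injective (natToInt : (ι → ℕ) → ι → ℤ) :=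
  fun _ _ h => funext fun i => by simpa [natToInt] using congrFun h i

lemma natToInt_add (x y : ι → ℕ) : natToInt (x + y) = natToInt x + natToInt y := by
  funext i; simp [natToInt]

lemma natToInt_posOf_eq_add (z : ι → ℤ) : natToInt (posOf z) = natToInt (negOf z) + z := by
  funext i; simp only [natToInt, posOf, negOf, Pi.add_apply]; omega

lemma posOf_natToInt_sub (x y : ι → ℕ) : posOf (natToInt x - natToInt y) = x - y := by
  funext i; simp only [posOf, natToInt, Pi.sub_apply]; omega

lemma negOf_natToInt_sub (x y : ι → ℕ) : negOf (natToInt x - natToInt y) = y - x := by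
  funext i; simp only [negOf, natToInt, Pi.sub_apply]; omega

lemma exists_eq_add_negOf_of_step {u v : ι → ℕ} {z : ι → ℤ}
    (h : natToInt v = natToInt u + z) : ∃ r, u = r + negOf z ∧ v = r + posOf z := by
  refine ⟨u - negOf z, ?_, ?_⟩ <;> funext i <;> have := congrFun h i <;>
    simp only [natToInt, posOf, negOf, Pi.add_apply, Pi.sub_apply] at this ⊢ <;> omega

lemma MStep.symm {B : Set (ι → ℤ)} {x y : ι → ℕ} (h : MStep B x y) : MStep B y x := by
  obtain ⟨z, hz, h | h⟩ := h
  exacts [⟨z, hz, Or.inr (by rw [h]; abel)⟩, ⟨z, hz, Or.inl (by rw [h]; abel)⟩]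

namespace Accessible

variable {B B' : Set (ι → ℤ)} {x y u : ι → ℕ}

lemma refl (x : ι → ℕ) : Accessible B x x := Relation.ReflTransGen.refl

lemma trans (h₁ : Accessible B x y) (h₂ : Accessible B y u) : Accessible B x u :=
  Relation.ReflTransGen.trans h₁ h₂

lemma of_add {z : ι → ℤ} (hz : z ∈ B) (h : natToInt y = natToInt x + z) : Accessible B x y :=
  Relation.ReflTransGen.single ⟨z, hz, Or.inl h⟩

lemma symm (h : Accessible B x y) : Accessible B y x := by
  induction h with
  | refl => exact refl x
  | tail _ hstep ih => exact Relation.ReflTransGen.head hstep.symm ih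

lemma mono (hBB' : B ⊆ B') (h : Accessible B x y) : Accessible B' x y :=
  Relation.ReflTransGen.mono (r := MStep B) (p := MStep B')
    (fun _ _ ⟨z, hz, hstep⟩ => ⟨z, hBB' hz, hstep⟩) _ _ h

lemma add_left (r : ι → ℕ) (h : Accessible B x y) : Accessible B (r + x) (r + y) := by
  refine Relation.ReflTransGen.lift (r := MStep B) (p := MStep B) (r + ·)
    (fun _ _ ⟨z, hz, hstep⟩ => ⟨z, hz, ?_⟩) _ _ h
  rcases hstep with hstep | hstep
  · exact Or.inl (by rw [natToInt_add, natToInt_add, hstep]; abel)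
  · exact Or.inr (by rw [natToInt_add, natToInt_add, hstep]; abel)

-- A `B'`-step is a translate of a step `z⁻ → z⁺` with `z ∈ B'`.
lemma of_forall_parts (hparts : ∀ z ∈ B', Accessible B (negOf z) (posOf z))
    (h : Accessible B' x y) : Accessible B x y := by
  induction h with
  | refl => exact refl x
  | @tail b c _ hstep ih =>
    refine ih.trans ?_
    obtain ⟨z, hz, hstep | hstep⟩ := hstep
    · obtain ⟨r, rfl, rfl⟩ := exists_eq_add_negOf_of_step hstep
      exact (hparts z hz).add_left r
    · obtain ⟨r, rfl, rfl⟩ :=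
        exists_eq_add_negOf_of_step (show natToInt b = natToInt c + z by rw [hstep]; abel)
      exact ((hparts z hz).add_left r).symm

end Accessible

variable [Fintype ι] {A : Matrix κ ι ℤ}

lemma eq_zero_of_sum_eq_zero {x : ι → ℕ} (h : ∑ i, x i = 0) : x = 0 :=
  (Fintype.sum_eq_zero_iff_of_nonneg fun _ => Nat.zero_le _).1 h

lemma eq_of_le_of_sum_eq {x y : ι → ℕ} (hle : x ≤ y) (h : ∑ i, x i = ∑ i, y i) : x = y :=
  funext fun i => (Finset.sum_eq_sum_iff_of_le fun j _ => hle j).1 h i (Finset.mem_univ i)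

lemma IsMove.mulVec_posOf_eq {z : ι → ℤ} (hz : IsMove A z) :
    A *ᵥ natToInt (posOf z) = A *ᵥ natToInt (negOf z) := by
  rw [natToInt_posOf_eq_add, Matrix.mulVec_add, hz, add_zero]

lemma isMove_natToInt_sub {x y : ι → ℕ} (h : A *ᵥ natToInt x = A *ᵥ natToInt y) :
    IsMove A (natToInt x - natToInt y) := by
  rw [IsMove, Matrix.mulVec_sub, h, sub_self]

lemma bmoves_mono {m n : ℕ} (h : m ≤ n) : Bmoves A m ⊆ Bmoves A n :=
  fun _ hz => ⟨hz.1, hz.2.trans h⟩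

lemma MStep.mulVec_eq {B : Set (ι → ℤ)} (hB : ∀ z ∈ B, IsMove A z) {x y : ι → ℕ}
    (h : MStep B x y) : A *ᵥ natToInt x = A *ᵥ natToInt y := by
  obtain ⟨z, hz, h | h⟩ := h <;> rw [h]
  · rw [Matrix.mulVec_add, hB z hz, add_zero]
  · rw [Matrix.mulVec_sub, hB z hz, sub_zero]

lemma Accessible.mulVec_eq {B : Set (ι → ℤ)} (hB : ∀ z ∈ B, IsMove A z) {x y : ι → ℕ}
    (h : Accessible B x y) : A *ᵥ natToInt x = A *ᵥ natToInt y := by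
  induction h with
  | refl => rfl
  | tail _ hstep ih => exact ih.trans (hstep.mulVec_eq hB)

lemma IsMarkovBasis.of_forall_parts {B B' : Set (ι → ℤ)} (hB' : IsMarkovBasis A B')
    (hfin : B.Finite) (hB : ∀ z ∈ B, IsMove A z)
    (hparts : ∀ z ∈ B', Accessible B (negOf z) (posOf z)) : IsMarkovBasis A B :=
  ⟨hfin, hB, fun t x hx y hy => (hB'.2.2 t x hx y hy).of_forall_parts hparts⟩

/-- `x ∼ y mod B_{|x|-1}`. -/
def LowerAccessible (A : Matrix κ ι ℤ) (x y : ι → ℕ) : Prop :=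
  Accessible (Bmoves A (∑ i, x i - 1)) x y

lemma LowerAccessible.mulVec_eq {x y : ι → ℕ} (h : LowerAccessible A x y) :
    A *ᵥ natToInt x = A *ᵥ natToInt y :=
  Accessible.mulVec_eq (fun _ hz => hz.1) h

/-- `{x}` is a `B_{|x|-1}`-equivalence class. -/
def IsIsolated (A : Matrix κ ι ℤ) (x : ι → ℕ) : Prop :=
  ∀ y, LowerAccessible A x y → y = x

lemma IsMarkovBasis.exists_isMinimalMarkovBasis_subset {B : Set (ι → ℤ)}
    (hB : IsMarkovBasis A B) : ∃ B' ⊆ B, IsMinimalMarkovBasis A B' := by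
  obtain ⟨B', -, hmin⟩ := (hB.1.finite_subsets.subset fun _ h => h.1).exists_le_minimal
    (show B ∈ {B' | B' ⊆ B ∧ IsMarkovBasis A B'} from ⟨subset_rfl, hB⟩)
  exact ⟨B', hmin.prop.1, hmin.prop.2, fun B'' hlt hB'' =>
    hlt.not_subset (hmin.2 ⟨hlt.subset.trans hmin.prop.1, hB''⟩ hlt.subset)⟩

variable [Fintype κ]

lemma IsMove.sum_eq_zero (hA : IsHomogeneousMatrix A) {z : ι → ℤ} (hz : IsMove A z) :
    ∑ i, z i = 0 := by
  obtain ⟨w, hw⟩ := hA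
  -- `∑ z = (wᵀ A) z = wᵀ (A z) = 0`
  have hvec : w ᵥ* A.map (Int.cast : ℤ → ℚ) = fun _ => 1 := funext fun i => by
    simpa [Matrix.vecMul, dotProduct] using hw i
  have hzq : A.map (Int.cast : ℤ → ℚ) *ᵥ (Int.cast ∘ z) = 0 := by
    funext j
    simpa [Matrix.mulVec, dotProduct] using congrArg (Int.cast : ℤ → ℚ) (congrFun hz j)
  have key : ((∑ i, z i : ℤ) : ℚ) = w ⬝ᵥ (A.map (Int.cast : ℤ → ℚ) *ᵥ (Int.cast ∘ z)) := by
    rw [Matrix.dotProduct_mulVec, hvec]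
    simp [dotProduct]
  rw [hzq, dotProduct_zero] at key
  exact_mod_cast key

lemma sum_eq_of_mulVec_eq (hA : IsHomogeneousMatrix A) {x y : ι → ℕ}
    (h : A *ᵥ natToInt x = A *ᵥ natToInt y) : ∑ i, x i = ∑ i, y i := by
  have := (isMove_natToInt_sub h).sum_eq_zero hA
  simp only [natToInt, Pi.sub_apply, Finset.sum_sub_distrib] at this
  exact_mod_cast sub_eq_zero.1 this

lemma IsMove.degOf_eq_sum_negOf (hA : IsHomogeneousMatrix A) {z : ι → ℤ} (hz : IsMove A z) :
    degOf z = ∑ i, negOf z i :=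
  sum_eq_of_mulVec_eq hA hz.mulVec_posOf_eq

lemma LowerAccessible.symm (hA : IsHomogeneousMatrix A) {x y : ι → ℕ}
    (h : LowerAccessible A x y) : LowerAccessible A y x := by
  rw [LowerAccessible, ← sum_eq_of_mulVec_eq hA h.mulVec_eq]
  exact Accessible.symm h

lemma LowerAccessible.trans (hA : IsHomogeneousMatrix A) {x y u : ι → ℕ}
    (h₁ : LowerAccessible A x y) (h₂ : LowerAccessible A y u) : LowerAccessible A x u := by
  rw [LowerAccessible, ← sum_eq_of_mulVec_eq hA h₁.mulVec_eq] at h₂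
  exact Accessible.trans h₁ h₂

lemma bmoves_finite (hA : IsHomogeneousMatrix A) (n : ℕ) : (Bmoves A n).Finite := by
  refine (Set.Finite.pi (t := fun _ : ι => Set.Icc (-(n : ℤ)) n)
    fun _ => Set.finite_Icc _ _).subset ?_
  rintro z ⟨hz, hdeg⟩ i -
  have hle : ∀ f : ι → ℕ, f i ≤ ∑ j, f j :=
    fun f => Finset.single_le_sum (fun j _ => Nat.zero_le _) (Finset.mem_univ i)
  have hpos := (hle (posOf z)).trans hdeg
  have hneg := (hle (negOf z)).trans (hz.degOf_eq_sum_negOf hA ▸ hdeg)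
  simp only [posOf, negOf] at hpos hneg
  constructor <;> omega

lemma accessible_bmoves_of_sum_le (hA : IsHomogeneousMatrix A) {x y : ι → ℕ} {n : ℕ}
    (hxy : A *ᵥ natToInt x = A *ᵥ natToInt y) (hn : ∑ i, x i ≤ n) :
    Accessible (Bmoves A n) x y := by
  refine .of_add (z := natToInt y - natToInt x) ⟨isMove_natToInt_sub hxy.symm, ?_⟩ (by abel)
  calc degOf (natToInt y - natToInt x) = ∑ i, (y - x) i := by rw [degOf, posOf_natToInt_sub]
    _ ≤ ∑ i, y i := Finset.sum_le_sum fun i _ => tsub_le_self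
    _ ≤ n := sum_eq_of_mulVec_eq hA hxy ▸ hn

lemma eq_parts_of_step (hA : IsHomogeneousMatrix A) {u v : ι → ℕ} {z : ι → ℤ}
    (hz : IsMove A z) (h : natToInt v = natToInt u + z) (hdeg : ∑ i, u i ≤ degOf z) :
    u = negOf z ∧ v = posOf z := by
  obtain ⟨r, rfl, rfl⟩ := exists_eq_add_negOf_of_step h
  rw [hz.degOf_eq_sum_negOf hA] at hdeg
  simp only [Pi.add_apply, Finset.sum_add_distrib] at hdeg
  have hr : r = 0 := eq_zero_of_sum_eq_zero (by omega)
  simp [hr]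

lemma MStep.lowerAccessible_or_parts (hA : IsHomogeneousMatrix A) {B : Set (ι → ℤ)}
    (hB : ∀ z ∈ B, IsMove A z) {u v : ι → ℕ} (h : MStep B u v) :
    LowerAccessible A u v ∨
      ∃ w ∈ B, (u = negOf w ∧ v = posOf w) ∨ (u = posOf w ∧ v = negOf w) := by
  have huv := sum_eq_of_mulVec_eq hA (h.mulVec_eq hB)
  obtain ⟨z, hz, hstep⟩ := h
  by_cases hdeg : degOf z ≤ ∑ i, u i - 1
  · left
    rcases hstep with hstep | hstep
    · exact .of_add ⟨hB z hz, hdeg⟩ hstep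
    · exact Accessible.symm (Accessible.of_add (x := v) (y := u) (z := z) ⟨hB z hz, hdeg⟩
        (by rw [hstep]; abel))
  · right
    refine ⟨z, hz, ?_⟩
    rcases hstep with hstep | hstep
    · exact .inl (eq_parts_of_step hA (hB z hz) hstep (by omega))
    · exact .inr (eq_parts_of_step hA (hB z hz) (by rw [hstep]; abel) (by omega)).symm

lemma Accessible.exists_crossing (hA : IsHomogeneousMatrix A) {B : Set (ι → ℤ)}
    (hB : ∀ z ∈ B, IsMove A z) {S : Set (ι → ℕ)}
    (hS : ∀ u ∈ S, ∀ v, LowerAccessible A u v → v ∈ S) {x y : ι → ℕ} (h : Accessible B x y)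
    (hx : x ∈ S) (hy : y ∉ S) : ∃ w ∈ B, ¬ (posOf w ∈ S ↔ negOf w ∈ S) := by
  by_contra! hcross
  refine hy ?_
  clear hy
  induction h with
  | refl => exact hx
  | tail _ hstep ih =>
    rcases hstep.lowerAccessible_or_parts hA hB with hlow | ⟨w, hw, ⟨rfl, rfl⟩ | ⟨rfl, rfl⟩⟩
    · exact hS _ ih _ hlow
    · exact (hcross w hw).2 ih
    · exact (hcross w hw).1 ih

lemma IsIsolated.isIndispensableMonomial (hA : IsHomogeneousMatrix A) {x y : ι → ℕ}
    (hx : IsIsolated A x) (hyx : A *ᵥ natToInt y = A *ᵥ natToInt x)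
    (hxy : ¬ LowerAccessible A x y) : IsIndispensableMonomial A x := by
  intro B hB
  obtain ⟨w, hw, hcross⟩ := (hB.2.2 _ x rfl y hyx).exists_crossing hA hB.2.1 (S := {x})
    (fun u hu v huv => hx v (Set.mem_singleton_iff.1 hu ▸ huv)) rfl
    (fun hy => hxy (Set.mem_singleton_iff.1 hy ▸ Accessible.refl x))
  simp only [Set.mem_singleton_iff] at hcross
  exact ⟨w, hw, by tauto⟩

-- `a + r → b + r → b + s` uses two moves of degree less than `|a + r|`.
lemma lowerAccessible_of_lt (hA : IsHomogeneousMatrix A) {a b x y : ι → ℕ}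
    (hab : A *ᵥ natToInt a = A *ᵥ natToInt b) (ha : a ≠ 0)
    (hxy : A *ᵥ natToInt x = A *ᵥ natToInt y) (hlt : (a, b) < (x, y)) :
    LowerAccessible A x y := by
  obtain ⟨hax, hby⟩ : a ≤ x ∧ b ≤ y := hlt.le
  obtain ⟨r, rfl⟩ := exists_add_of_le hax
  obtain ⟨s, rfl⟩ := exists_add_of_le hby
  have hrs : A *ᵥ natToInt r = A *ᵥ natToInt s := by
    rw [natToInt_add, natToInt_add, Matrix.mulVec_add, Matrix.mulVec_add, hab] at hxy
    exact add_left_cancel hxy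
  have hsum_ab := sum_eq_of_mulVec_eq hA hab
  have hsum_rs := sum_eq_of_mulVec_eq hA hrs
  have hr : r ≠ 0 := by
    rintro rfl
    have hs : s = 0 := eq_zero_of_sum_eq_zero (by simpa using hsum_rs.symm)
    exact hlt.ne (by simp [hs])
  have hpos_a : 0 < ∑ i, a i := Nat.pos_of_ne_zero (mt eq_zero_of_sum_eq_zero ha)
  have hpos_r : 0 < ∑ i, r i := Nat.pos_of_ne_zero (mt eq_zero_of_sum_eq_zero hr)
  have h₁ := (accessible_bmoves_of_sum_le hA hab le_rfl).add_left r
  have h₂ := (accessible_bmoves_of_sum_le hA hrs le_rfl).add_left b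
  rw [add_comm r a, add_comm r b] at h₁
  simp only [LowerAccessible, Pi.add_apply, Finset.sum_add_distrib]
  exact (h₁.mono (bmoves_mono (by omega))).trans (h₂.mono (bmoves_mono (by omega)))

-- By Dickson's lemma, since these pairs `(x, y)` form an antichain.
lemma exists_sum_le_of_not_lowerAccessible (hA : IsHomogeneousMatrix A) :
    ∃ N, ∀ x y : ι → ℕ, A *ᵥ natToInt x = A *ᵥ natToInt y → ¬ LowerAccessible A x y →
      ∑ i, x i ≤ N := by
  set G : Set ((ι → ℕ) × (ι → ℕ)) :=
    {q | A *ᵥ natToInt q.1 = A *ᵥ natToInt q.2 ∧ ¬ LowerAccessible A q.1 q.2}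
  have hG : IsAntichain (· ≤ ·) G := by
    rintro ⟨a, b⟩ ⟨hab, hnab⟩ ⟨x, y⟩ ⟨hxy, hnxy⟩ hne hle
    refine hnxy (lowerAccessible_of_lt hA hab ?_ hxy (lt_of_le_of_ne hle hne))
    rintro rfl
    have hb : b = 0 := eq_zero_of_sum_eq_zero (by simpa using (sum_eq_of_mulVec_eq hA hab).symm)
    exact hnab (hb ▸ Accessible.refl 0)
  obtain ⟨N, hN⟩ :=
    ((WellQuasiOrderedLE.finite_of_isAntichain hG).image fun q => ∑ i, q.1 i).bddAbove
  exact ⟨N, fun x y hxy hlow => hN ⟨(x, y), ⟨hxy, hlow⟩, rfl⟩⟩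

-- Induction on `|x|`: the parts of a move in `B_{|x|-1}` lie in a fiber of smaller sample size.
lemma accessible_of_forall_accessible_union_bmoves (hA : IsHomogeneousMatrix A)
    {B : Set (ι → ℤ)}
    (h : ∀ x y : ι → ℕ, A *ᵥ natToInt x = A *ᵥ natToInt y →
      Accessible (B ∪ Bmoves A (∑ i, x i - 1)) x y)
    {x y : ι → ℕ} (hxy : A *ᵥ natToInt x = A *ᵥ natToInt y) : Accessible B x y := by
  induction hn : ∑ i, x i using Nat.strong_induction_on generalizing x y with
  | _ n ih =>
  refine (h x y hxy).of_forall_parts fun z hz => ?_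
  rcases hz with hz | ⟨hz, hdeg⟩
  · exact .of_add hz (natToInt_posOf_eq_add z)
  · rw [hz.degOf_eq_sum_negOf hA, hn] at hdeg
    rcases Nat.eq_zero_or_pos (∑ i, negOf z i) with h0 | hpos
    · rw [eq_zero_of_sum_eq_zero h0,
        eq_zero_of_sum_eq_zero ((hz.degOf_eq_sum_negOf hA).trans h0)]
      exact .refl 0
    · exact ih _ (by omega) hz.mulVec_posOf_eq.symm rfl

lemma isMarkovBasis_bmoves_of_le (hA : IsHomogeneousMatrix A) {N : ℕ}
    (hN : ∀ x y : ι → ℕ, A *ᵥ natToInt x = A *ᵥ natToInt y → ¬ LowerAccessible A x y →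
      ∑ i, x i ≤ N) {n : ℕ} (hn : N ≤ n) : IsMarkovBasis A (Bmoves A n) := by
  refine ⟨bmoves_finite hA n, fun z hz => hz.1, fun t x hx y hy =>
    accessible_of_forall_accessible_union_bmoves hA (fun x y hxy => ?_) (hx.trans hy.symm)⟩
  by_cases hlow : LowerAccessible A x y
  · exact hlow.mono Set.subset_union_right
  · exact (accessible_bmoves_of_sum_le hA hxy ((hN x y hxy hlow).trans hn)).mono
      Set.subset_union_left

lemma accessible_of_lowerAccessible_of_ne (hA : IsHomogeneousMatrix A) {x x' : ι → ℕ}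
    (hne : x' ≠ x) (hxx' : LowerAccessible A x x') {M : ℕ} (hM : ∑ i, x i ≤ M) {y : ι → ℕ}
    (hy : A *ᵥ natToInt y = A *ᵥ natToInt x) :
    Accessible {z | z ∈ Bmoves A M ∧ posOf z ≠ x ∧ negOf z ≠ x} x y := by
  have hsum : ∀ u, A *ᵥ natToInt u = A *ᵥ natToInt x → ∑ i, u i = ∑ i, x i :=
    fun u hu => sum_eq_of_mulVec_eq hA hu
  have hx' : A *ᵥ natToInt x' = A *ᵥ natToInt x := hxx'.mulVec_eq.symm
  have hpos : 0 < ∑ i, x i := Nat.pos_of_ne_zero fun h0 => hne <| by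
    rw [eq_zero_of_sum_eq_zero h0, eq_zero_of_sum_eq_zero ((hsum x' hx').trans h0)]
  have hlow : Bmoves A (∑ i, x i - 1) ⊆ {z | z ∈ Bmoves A M ∧ posOf z ≠ x ∧ negOf z ≠ x} :=
    fun z ⟨hz, hdeg⟩ => ⟨bmoves_mono (by omega) ⟨hz, hdeg⟩,
      fun h => by rw [degOf, h] at hdeg; omega,
      fun h => by rw [hz.degOf_eq_sum_negOf hA, h] at hdeg; omega⟩
  by_cases hyx : y = x
  · subst hyx
    exact .refl y
  refine (hxx'.mono hlow).trans (.of_add (z := natToInt y - natToInt x')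
    ⟨⟨isMove_natToInt_sub (hy.trans hx'.symm), ?_⟩, ?_, ?_⟩ (by abel))
  · calc degOf (natToInt y - natToInt x') = ∑ i, (y - x') i := by
          rw [degOf, posOf_natToInt_sub]
      _ ≤ ∑ i, y i := Finset.sum_le_sum fun i _ => tsub_le_self
      _ ≤ M := hsum y hy ▸ hM
  · rw [posOf_natToInt_sub]
    intro h
    have hle : x ≤ y := h ▸ tsub_le_self
    exact hyx (eq_of_le_of_sum_eq hle (hsum y hy).symm).symm
  · rw [negOf_natToInt_sub]
    intro h
    have hle : x ≤ x' := h ▸ tsub_le_self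
    exact hne (eq_of_le_of_sum_eq hle (hsum x' hx').symm).symm

-- Every move of `B_M` with a part equal to `x` has both parts in the fiber of `x`, which the
-- remaining moves connect through `x'`.
lemma exists_isMarkovBasis_forall_ne (hA : IsHomogeneousMatrix A) {x x' : ι → ℕ}
    (hne : x' ≠ x) (hxx' : LowerAccessible A x x') :
    ∃ B, IsMarkovBasis A B ∧ ∀ z ∈ B, posOf z ≠ x ∧ negOf z ≠ x := by
  obtain ⟨N, hN⟩ := exists_sum_le_of_not_lowerAccessible hA
  set M := max N (∑ i, x i)
  refine ⟨{z | z ∈ Bmoves A M ∧ posOf z ≠ x ∧ negOf z ≠ x},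
    (isMarkovBasis_bmoves_of_le hA hN (le_max_left N (∑ i, x i))).of_forall_parts
      ((bmoves_finite hA M).subset fun z hz => hz.1) (fun z hz => hz.1.1) fun z hz => ?_,
    fun z hz => hz.2⟩
  by_cases hzx : posOf z ≠ x ∧ negOf z ≠ x
  · exact .of_add ⟨hz, hzx⟩ (natToInt_posOf_eq_add z)
  have hparts := hz.1.mulVec_posOf_eq
  have hfib : A *ᵥ natToInt (posOf z) = A *ᵥ natToInt x ∧
      A *ᵥ natToInt (negOf z) = A *ᵥ natToInt x := by
    rcases not_and_or.1 hzx with h | h <;> rw [not_not] at h <;> rw [← h]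
    exacts [⟨rfl, hparts.symm⟩, ⟨hparts, rfl⟩]
  have hM : ∑ i, x i ≤ M := le_max_right _ _
  exact (accessible_of_lowerAccessible_of_ne hA hne hxx' hM hfib.2).symm.trans
    (accessible_of_lowerAccessible_of_ne hA hne hxx' hM hfib.1)

lemma IsIndispensableMonomial.isIsolated (hA : IsHomogeneousMatrix A) {x : ι → ℕ}
    (hx : IsIndispensableMonomial A x) : IsIsolated A x := by
  intro y hxy
  by_contra hne
  obtain ⟨B, hB, havoid⟩ := exists_isMarkovBasis_forall_ne hA hne hxy
  obtain ⟨z, hz, h | h⟩ := hx B hB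
  exacts [(havoid z hz).1 h, (havoid z hz).2 h]

-- `x` and `y` have disjoint supports: a common coordinate would make `y - x` a move of
-- degree less than `|x|`.
lemma parts_natToInt_sub_of_not_lowerAccessible (hA : IsHomogeneousMatrix A) {x y : ι → ℕ}
    (hxy : A *ᵥ natToInt x = A *ᵥ natToInt y) (h : ¬ LowerAccessible A x y) :
    posOf (natToInt y - natToInt x) = y ∧ negOf (natToInt y - natToInt x) = x := by
  have hdisj : ∀ i, x i = 0 ∨ y i = 0 := by
    by_contra! ⟨i, hxi, hyi⟩
    refine h (.of_add (z := natToInt y - natToInt x) ⟨isMove_natToInt_sub hxy.symm, ?_⟩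
      (by abel))
    have hlt : ∑ j, (y - x) j < ∑ j, y j :=
      Finset.sum_lt_sum (fun j _ => tsub_le_self) ⟨i, Finset.mem_univ i, by simp; omega⟩
    rw [degOf, posOf_natToInt_sub, sum_eq_of_mulVec_eq hA hxy]
    omega
  rw [posOf_natToInt_sub, negOf_natToInt_sub]
  constructor <;> funext i <;> rcases hdisj i with h | h <;> simp [h]

def isolatedMoves (A : Matrix κ ι ℤ) : Set (ι → ℤ) :=
  {z | IsMove A z ∧ IsIsolated A (negOf z) ∧ ¬ LowerAccessible A (negOf z) (posOf z)}

lemma isIndispensableMonomial_negOf_of_mem_isolatedMoves (hA : IsHomogeneousMatrix A)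
    {z : ι → ℤ} (hz : z ∈ isolatedMoves A) : IsIndispensableMonomial A (negOf z) :=
  hz.2.1.isIndispensableMonomial hA hz.1.mulVec_posOf_eq hz.2.2

-- In a fiber with an isolated point `c`, each `u` outside `{c}` is one move `u - c` away.
lemma isMarkovBasis_isolatedMoves (hA : IsHomogeneousMatrix A)
    (h : ∀ x y : ι → ℕ, A *ᵥ natToInt x = A *ᵥ natToInt y → ¬ LowerAccessible A x y →
      ∃ c ∈ fiberOf A (A *ᵥ natToInt x), IsIsolated A c) :
    IsMarkovBasis A (isolatedMoves A) := by
  obtain ⟨N, hN⟩ := exists_sum_le_of_not_lowerAccessible hA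
  refine ⟨(bmoves_finite hA N).subset fun z ⟨hz, _, hgap⟩ => ⟨hz, ?_⟩, fun z hz => hz.1,
    fun t x hx y hy =>
      accessible_of_forall_accessible_union_bmoves hA (fun x y hxy => ?_) (hx.trans hy.symm)⟩
  · exact (hz.degOf_eq_sum_negOf hA).trans_le (hN _ _ hz.mulVec_posOf_eq.symm hgap)
  by_cases hlow : LowerAccessible A x y
  · exact hlow.mono Set.subset_union_right
  obtain ⟨c, hc, hc_iso⟩ := h x y hxy hlow
  have hfrom_c :
      ∀ u, A *ᵥ natToInt u = A *ᵥ natToInt x → Accessible (isolatedMoves A) c u := by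
    intro u hu
    by_cases hcu : LowerAccessible A c u
    · rw [hc_iso u hcu]
      exact .refl c
    obtain ⟨hpos, hneg⟩ := parts_natToInt_sub_of_not_lowerAccessible hA (hc.trans hu.symm) hcu
    refine .of_add (z := natToInt u - natToInt c)
      ⟨isMove_natToInt_sub (hu.trans hc.symm), ?_, ?_⟩ (by abel)
    · rwa [hneg]
    · rwa [hneg, hpos]
  exact ((hfrom_c x rfl).symm.trans (hfrom_c y hxy.symm)).mono Set.subset_union_left

lemma sampleSize_eq_sum (hA : IsHomogeneousMatrix A) {t : κ → ℤ} {x : ι → ℕ}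
    (hx : x ∈ fiberOf A t) : sampleSize A t = ∑ i, x i := by
  have : {n | ∃ y ∈ fiberOf A t, ∑ i, y i = n} = {∑ i, x i} := by
    ext n
    constructor
    · rintro ⟨y, hy, rfl⟩
      exact sum_eq_of_mulVec_eq hA (hy.trans hx.symm)
    · rintro rfl
      exact ⟨x, hx, rfl⟩
  rw [sampleSize, this, csInf_singleton]

lemma exists_singleton_mem_fiberClasses_iff (hA : IsHomogeneousMatrix A) (t : κ → ℤ) :
    (∃ C ∈ fiberClasses A t, ∃ x, C = {x}) ↔ ∃ c ∈ fiberOf A t, IsIsolated A c := by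
  constructor
  · rintro ⟨_, ⟨u, hu, rfl⟩, c, hC⟩
    obtain ⟨hc, huc⟩ : c ∈ fiberOf A t ∧ _ := hC.symm ▸ Set.mem_singleton c
    refine ⟨c, hc, fun y hcy => ?_⟩
    have hy : y ∈ ({c} : Set (ι → ℕ)) := by
      rw [← hC]
      refine ⟨hcy.mulVec_eq.symm.trans hc, huc.trans ?_⟩
      rwa [sampleSize_eq_sum hA hc]
    exact hy
  · rintro ⟨c, hc, hc_iso⟩
    refine ⟨_, ⟨c, hc, rfl⟩, c, Set.eq_singleton_iff_unique_mem.2 ⟨⟨hc, .refl c⟩, ?_⟩⟩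
    rintro y ⟨-, hcy⟩
    rw [sampleSize_eq_sum hA hc] at hcy
    exact hc_iso y hcy

end Moves

section MinimumFiber

variable {p d : ℕ} {A : Matrix (Fin d) (Fin p) ℤ}

lemma natToInt_sub_mem_BMF (hA : IsHomogeneousMatrix A) {x y : Fin p → ℕ}
    (hxy : A *ᵥ natToInt x = A *ᵥ natToInt y) (h : ¬ LowerAccessible A x y) :
    natToInt x - natToInt y ∈ BMF A ∧ posOf (natToInt x - natToInt y) = x := by
  obtain ⟨hpos, hneg⟩ := parts_natToInt_sub_of_not_lowerAccessible hA hxy.symm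
    fun hyx => h (hyx.symm hA)
  refine ⟨⟨isMove_natToInt_sub hxy, fun h0 => ?_, ?_⟩, hpos⟩
  · exact h (natToInt_injective (sub_eq_zero.1 h0) ▸ .refl x)
  · rw [degOf, hpos, hneg]
    exact h

lemma exists_isIsolated_of_mem_BMF (hA : IsHomogeneousMatrix A) {B : Set (Fin p → ℤ)}
    (hB : IsMarkovBasis A B)
    (hind : ∀ z ∈ B,
      IsIndispensableMonomial A (posOf z) ∨ IsIndispensableMonomial A (negOf z))
    {z : Fin p → ℤ} (hz : z ∈ BMF A) :
    ∃ c ∈ fiberOf A (A *ᵥ natToInt (posOf z)), IsIsolated A c := by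
  obtain ⟨hz, -, hlow⟩ := hz
  obtain ⟨w, hw, hcross⟩ := (hB.2.2 _ _ rfl _ hz.mulVec_posOf_eq.symm).exists_crossing hA
    hB.2.1 (S := {v | LowerAccessible A (posOf z) v}) (fun _ hu _ huv => hu.trans hA huv)
    (.refl _) hlow
  have hparts := (hB.2.1 w hw).mulVec_posOf_eq
  have hfib : A *ᵥ natToInt (posOf w) = A *ᵥ natToInt (posOf z) ∧
      A *ᵥ natToInt (negOf w) = A *ᵥ natToInt (posOf z) := by
    have : LowerAccessible A (posOf z) (posOf w) ∨ LowerAccessible A (posOf z) (negOf w) := by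
      simp only [Set.mem_ofPred_eq] at hcross
      tauto
    rcases this with h | h
    · exact ⟨h.mulVec_eq.symm, hparts.symm.trans h.mulVec_eq.symm⟩
    · exact ⟨hparts.trans h.mulVec_eq.symm, h.mulVec_eq.symm⟩
  rcases hind w hw with h | h
  exacts [⟨_, hfib.1, h.isIsolated hA⟩, ⟨_, hfib.2, h.isIsolated hA⟩]

end MinimumFiber

theorem exists_minimal_basis_with_indispensable_monomials_iff_general
    {p d : ℕ}
    (A : Matrix (Fin d) (Fin p) ℤ) (hA : IsHomogeneousMatrix A) :
    (∃ B : Set (Fin p → ℤ), IsMinimalMarkovBasis A B ∧ ∀ z ∈ B,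
        IsIndispensableMonomial A (posOf z) ∨ IsIndispensableMonomial A (negOf z)) ↔
      ∀ z ∈ BMF A, ∃ C ∈ fiberClasses A (A.mulVec (natToInt (posOf z))),
        ∃ x : Fin p → ℕ, C = {x} := by
  simp_rw [exists_singleton_mem_fiberClasses_iff hA]
  constructor
  · rintro ⟨B, hB, hind⟩ z hz
    exact exists_isIsolated_of_mem_BMF hA hB.1 hind hz
  · intro h
    obtain ⟨B, hB_sub, hB⟩ := (isMarkovBasis_isolatedMoves hA fun x y hxy hlow => by
      obtain ⟨hz, hpos⟩ := natToInt_sub_mem_BMF hA hxy hlow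
      simpa only [hpos] using h _ hz).exists_isMinimalMarkovBasis_subset
    exact ⟨B, hB, fun z hz =>
      .inr (isIndispensableMonomial_negOf_of_mem_isolatedMoves hA (hB_sub hz))⟩

/-- some minimal Markov basis has every move containing an indispensable
monomial iff every fiber of `B_MF` contains a singleton equivalence class. -/
theorem exists_minimal_basis_with_indispensable_monomials_iff
    {p d : ℕ} (hp : 0 < p) (hd : 0 < d)
    (A : Matrix (Fin d) (Fin p) ℤ) (hA : IsHomogeneousMatrix A) :
    (∃ B : Set (Fin p → ℤ), IsMinimalMarkovBasis A B ∧ ∀ z ∈ B,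
        IsIndispensableMonomial A (posOf z) ∨ IsIndispensableMonomial A (negOf z)) ↔
      ∀ z ∈ BMF A, ∃ C ∈ fiberClasses A (A.mulVec (natToInt (posOf z))),
        ∃ x : Fin p → ℕ, C = {x} :=
  exists_minimal_basis_with_indispensable_monomials_iff_general A hA
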